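/- arXiv:1201.4153 — 2 statements merged into one kernel-verified Lean document; each statement's English description precedes it below -/
import Mathlib

section
/- For any vertex x and vector v of initial values on a connected d-regular graph, the entry at x of the vector ∏_{t=1}^m (A - λ_t I) v equals (∑_i v_i) · (1/n)·∏_{t=1}^m (d - λ_t); in particular it is a fixed nonzero scalar multiple of the global sum, independent of x. -/
/-!
Since `A` is symmetric, every polynomial vanishing on its spectrum annihilates it; in particular
`(A - d) ∏_{t ≥ 1} (A - λ_t) = 0`, so `u = ∏_{t ≥ 1} (A - λ_t) v` is a `d`-eigenvector of `A`,
hence constant on the connected graph `G`. On the other hand the all-ones vector is a left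
eigenvector of `A` for `d`, so the entries of `u` sum to `∏_{t ≥ 1} (d - λ_t) · ∑ v`.
Both facts together give `n · u_x = ∏_{t ≥ 1} (d - λ_t) · ∑ v`.
-/

open Matrix Polynomial

theorem aeval_prod_X_sub_C {R A : Type*} [CommRing R] [Ring A] [Algebra R A] (a : A) {m : ℕ}
    (f : Fin m → R) :
    aeval a (∏ t, (X - C (f t))) = (List.ofFn fun t => a - algebraMap R A (f t)).prod := by
  rw [← List.prod_ofFn, map_list_prod, List.map_ofFn]
  simp [Function.comp_def]

theorem aeval_eq_zero_of_eval_eq_zero_on_spectrum {A : Type*} [Ring A] [StarRing A]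
    [TopologicalSpace A] [Algebra ℝ A] [ContinuousFunctionalCalculus ℝ A IsSelfAdjoint]
    {a : A} (ha : IsSelfAdjoint a) {q : ℝ[X]} (hq : ∀ x ∈ spectrum ℝ a, q.eval x = 0) :
    aeval a q = 0 := by
  rw [← cfc_polynomial q a, cfc_congr hq, cfc_const_zero]

theorem vecMul_aeval_of_vecMul_eq_smul {n R : Type*} [Fintype n] [DecidableEq n] [CommRing R]
    {A : Matrix n n R} {w : n → R} {μ : R} (h : w ᵥ* A = μ • w) (q : R[X]) :
    w ᵥ* aeval A q = q.eval μ • w := by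
  induction q using Polynomial.induction_on' with
  | add p q hp hq => simp only [map_add, vecMul_add, hp, hq, eval_add, add_smul]
  | monomial k c =>
    have hpow : w ᵥ* A ^ k = μ ^ k • w := by
      induction k with
      | zero => simp
      | succ k ih => rw [pow_succ, ← vecMul_vecMul, ih, smul_vecMul, h, smul_smul, pow_succ]
    rw [aeval_monomial, Algebra.algebraMap_eq_smul_one, smul_mul_assoc, one_mul, vecMul_smul,
      hpow, eval_monomial, smul_smul, mul_comm]

namespace SimpleGraph

variable {V : Type*} [Fintype V] {G : SimpleGraph V} [DecidableRel G.Adj] {d : ℕ}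

theorem IsRegularOfDegree.one_vecMul_adjMatrix (hreg : G.IsRegularOfDegree d) :
    (1 : V → ℝ) ᵥ* G.adjMatrix ℝ = (d : ℝ) • 1 := by
  ext j
  simp [adjMatrix_vecMul_apply, hreg j]

variable [DecidableEq V]

theorem IsRegularOfDegree.sum_aeval_adjMatrix_mulVec (hreg : G.IsRegularOfDegree d) (q : ℝ[X])
    (v : V → ℝ) : ∑ i, (aeval (G.adjMatrix ℝ) q *ᵥ v) i = q.eval (d : ℝ) * ∑ i, v i := by
  rw [← one_dotProduct, dotProduct_mulVec,
    vecMul_aeval_of_vecMul_eq_smul hreg.one_vecMul_adjMatrix, smul_dotProduct, one_dotProduct,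
    smul_eq_mul]

theorem IsRegularOfDegree.adjMatrix_mulVec_eq_smul_iff_lapMatrix_mulVec_eq_zero
    (hreg : G.IsRegularOfDegree d) (u : V → ℝ) :
    G.adjMatrix ℝ *ᵥ u = (d : ℝ) • u ↔ G.lapMatrix ℝ *ᵥ u = 0 := by
  have hdeg : G.degMatrix ℝ = (d : ℝ) • 1 := by
    ext i j
    simp [degMatrix, diagonal_apply, one_apply, hreg i]
  rw [lapMatrix, sub_mulVec, hdeg, smul_mulVec, one_mulVec, sub_eq_zero, eq_comm]

theorem Connected.eq_of_adjMatrix_mulVec_eq_smul (hconn : G.Connected)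
    (hreg : G.IsRegularOfDegree d) {u : V → ℝ} (hu : G.adjMatrix ℝ *ᵥ u = (d : ℝ) • u)
    (i j : V) : u i = u j :=
  (G.lapMatrix_mulVec_eq_zero_iff_forall_reachable.mp
    ((hreg.adjMatrix_mulVec_eq_smul_iff_lapMatrix_mulVec_eq_zero u).mp hu)) i j
    (hconn.preconnected i j)

end SimpleGraph

theorem stmt4_general (n m d : ℕ) (G : SimpleGraph (Fin n)) [DecidableRel G.Adj]
    (hconn : G.Connected) (hreg : G.IsRegularOfDegree d)
    (lam : Fin (m + 1) → ℝ) (hlam0 : lam 0 = d)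
    (hspec : spectrum ℝ (G.adjMatrix ℝ) = Set.range lam)
    (v : Fin n → ℝ) (x : Fin n) :
    (List.ofFn fun t : Fin m =>
        G.adjMatrix ℝ - lam t.succ • (1 : Matrix (Fin n) (Fin n) ℝ)).prod.mulVec v x =
      (∑ i, v i) * ((1 / (n : ℝ)) * ∏ t : Fin m, ((d : ℝ) - lam t.succ)) := by
  set A := G.adjMatrix ℝ
  set q : ℝ[X] := ∏ t : Fin m, (X - C (lam t.succ))
  have hP : (List.ofFn fun t : Fin m => A - lam t.succ • (1 : Matrix (Fin n) (Fin n) ℝ)).prod =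
      aeval A q := by
    simp only [q, aeval_prod_X_sub_C, Algebra.algebraMap_eq_smul_one]
  have hannihilate : aeval A ((X - C (d : ℝ)) * q) = 0 := by
    rw [← hlam0, ← Fin.prod_univ_succ (fun t => X - C (lam t))]
    refine aeval_eq_zero_of_eval_eq_zero_on_spectrum (G.isSymm_adjMatrix (α := ℝ)) ?_
    intro _ hx
    obtain ⟨t, rfl⟩ := hspec ▸ hx
    rw [eval_prod]
    exact Finset.prod_eq_zero (Finset.mem_univ t) (by simp)
  set u := aeval A q *ᵥ v
  have heigen : A *ᵥ u = (d : ℝ) • u := by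
    have h := congrArg (· *ᵥ v) hannihilate
    simp only [map_mul, map_sub, aeval_X, aeval_C, Algebra.algebraMap_eq_smul_one] at h
    rwa [← mulVec_mulVec, sub_mulVec, smul_mulVec, one_mulVec, zero_mulVec, sub_eq_zero] at h
  have hconst : ∀ i, u i = u x := (hconn.eq_of_adjMatrix_mulVec_eq_smul hreg heigen · x)
  have hsum : (n : ℝ) * u x = q.eval (d : ℝ) * ∑ i, v i :=
    calc (n : ℝ) * u x = ∑ i, u i := by simp [hconst]
      _ = q.eval (d : ℝ) * ∑ i, v i := hreg.sum_aeval_adjMatrix_mulVec q v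
  have hn : (n : ℝ) ≠ 0 := Nat.cast_ne_zero.2 (Fin.pos_iff_nonempty.2 hconn.nonempty).ne'
  have hqd : q.eval (d : ℝ) = ∏ t : Fin m, ((d : ℝ) - lam t.succ) := by simp [q, eval_prod]
  rw [hP, ← hqd]
  field_simp
  linarith

/-- For any vertex `x` and vector `v` of initial values on a connected
`d`-regular graph, the entry at `x` of `∏_{t=1}^m (A - λ t I) v` equals
`(∑ i, v i) * (1/n) * ∏_{t=1}^m (d - λ t)`, a fixed scalar multiple of the global sum
independent of `x`. -/
theorem stmt4 (n m d : ℕ) (G : SimpleGraph (Fin n)) [DecidableRel G.Adj]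
    (hconn : G.Connected) (hreg : G.IsRegularOfDegree d)
    (lam : Fin (m + 1) → ℝ) (hanti : StrictAnti lam) (hlam0 : lam 0 = d)
    (hspec : spectrum ℝ (G.adjMatrix ℝ) = Set.range lam)
    (v : Fin n → ℝ) (x : Fin n) :
    (List.ofFn fun t : Fin m =>
        G.adjMatrix ℝ - lam t.succ • (1 : Matrix (Fin n) (Fin n) ℝ)).prod.mulVec v x =
      (∑ i, v i) * ((1 / (n : ℝ)) * ∏ t : Fin m, ((d : ℝ) - lam t.succ)) :=
  stmt4_general n m d G hconn hreg lam hlam0 hspec v x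
end

section
/- Let A be the adjacency matrix of a d-regular graph G on n vertices and p a polynomial of degree m with p(0) = 1 such that the operator norm ‖p(A - dI) - J/n‖ < 1/(n-1). Then every entry of p(A - dI) is positive, and consequently G has diameter at most m. -/
/-!
Let `M = A - dI`. Regularity gives `M 𝟙 = 0` and `𝟙ᵀ M = 0`, so `P = p(M)` fixes `𝟙` on both
sides because `p(0) = 1`, and `B = P - J/n` kills `𝟙` on both sides. Writing
`uᵢ = eᵢ - 𝟙/n`, this gives `B i j = uᵢᵀ B uⱼ`, and `‖uᵢ‖² = 1 - 1/n`, so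
`|B i j| ≤ ‖B‖ (1 - 1/n) < 1/n`; hence `P i j = B i j + 1/n > 0`. Since `M` is supported on the
diagonal and the edges of `G`, a nonzero entry `(Mᵏ) i j` yields a walk of length at most `k`
from `i` to `j`, so positivity of `p(M)` bounds the diameter by `deg p`.
-/

open scoped Matrix.Norms.L2Operator

open Matrix Polynomial WithLp

namespace Matrix

section Aeval

variable {ι R : Type*} [Fintype ι] [DecidableEq ι] [CommSemiring R]

theorem aeval_mulVec_of_mulVec_eq_zero {M : Matrix ι ι R} {v : ι → R} (hv : M *ᵥ v = 0)
    (p : R[X]) : aeval M p *ᵥ v = p.eval 0 • v := by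
  conv_lhs => rw [← divX_mul_X_add p]
  simp [add_mulVec, ← mulVec_mulVec, hv, coeff_zero_eq_eval_zero, Algebra.algebraMap_eq_smul_one,
    smul_mulVec]

theorem vecMul_aeval_of_vecMul_eq_zero {M : Matrix ι ι R} {v : ι → R} (hv : v ᵥ* M = 0)
    (p : R[X]) : v ᵥ* aeval M p = p.eval 0 • v := by
  conv_lhs => rw [← X_mul_divX_add p]
  simp [vecMul_add, ← vecMul_vecMul, hv, coeff_zero_eq_eval_zero, Algebra.algebraMap_eq_smul_one,
    vecMul_smul]

end Aeval

section L2

variable {ι : Type*} [Fintype ι]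

theorem norm_toLp_sq_eq_dotProduct (u : ι → ℝ) : ‖toLp 2 u‖ ^ 2 = u ⬝ᵥ u := by
  rw [← real_inner_self_eq_norm_sq, EuclideanSpace.inner_eq_star_dotProduct]; rfl

variable [DecidableEq ι]

theorem abs_dotProduct_mulVec_le_l2_opNorm (B : Matrix ι ι ℝ) (u v : ι → ℝ) :
    |u ⬝ᵥ (B *ᵥ v)| ≤ ‖toLp 2 u‖ * ‖B‖ * ‖toLp 2 v‖ :=
  calc |u ⬝ᵥ (B *ᵥ v)| = |inner ℝ (toLp 2 (B *ᵥ v)) (toLp 2 u)| := by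
        rw [EuclideanSpace.inner_eq_star_dotProduct, star_trivial, dotProduct_comm]
    _ ≤ ‖toLp 2 (B *ᵥ v)‖ * ‖toLp 2 u‖ := abs_real_inner_le_norm _ _
    _ ≤ ‖B‖ * ‖toLp 2 v‖ * ‖toLp 2 u‖ := by gcongr; exact l2_opNorm_mulVec B (toLp 2 v)
    _ = ‖toLp 2 u‖ * ‖B‖ * ‖toLp 2 v‖ := by ring

noncomputable def centeredSingle (i : ι) : ι → ℝ := Pi.single i 1 - (Fintype.card ι : ℝ)⁻¹ • 1

theorem one_dotProduct_centeredSingle (i : ι) : 1 ⬝ᵥ centeredSingle i = 0 := by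
  have : (Fintype.card ι : ℝ) ≠ 0 := Nat.cast_ne_zero.mpr (Fintype.card_pos_iff.mpr ⟨i⟩).ne'
  simp [centeredSingle, dotProduct_sub, this]

theorem centeredSingle_dotProduct (i : ι) {w : ι → ℝ} (hw : 1 ⬝ᵥ w = 0) :
    centeredSingle i ⬝ᵥ w = w i := by
  simp [centeredSingle, sub_dotProduct, hw]

theorem mulVec_centeredSingle {B : Matrix ι ι ℝ} (hB : B *ᵥ 1 = 0) (j : ι) :
    B *ᵥ centeredSingle j = fun k => B k j := by
  ext k
  simp [centeredSingle, mulVec_sub, mulVec_smul, hB]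

theorem norm_toLp_centeredSingle_sq (i : ι) :
    ‖toLp 2 (centeredSingle i)‖ ^ 2 = 1 - (Fintype.card ι : ℝ)⁻¹ := by
  rw [norm_toLp_sq_eq_dotProduct, centeredSingle_dotProduct i (one_dotProduct_centeredSingle i)]
  simp [centeredSingle]

theorem abs_apply_le_l2_opNorm_mul {B : Matrix ι ι ℝ} (hrow : B *ᵥ 1 = 0) (hcol : 1 ᵥ* B = 0)
    (i j : ι) : |B i j| ≤ ‖B‖ * (1 - (Fintype.card ι : ℝ)⁻¹) := by
  have hentry : B i j = centeredSingle i ⬝ᵥ (B *ᵥ centeredSingle j) := by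
    rw [centeredSingle_dotProduct i (by rw [dotProduct_mulVec, hcol, zero_dotProduct]),
      mulVec_centeredSingle hrow]
  have hnorms : ‖toLp 2 (centeredSingle i)‖ * ‖toLp 2 (centeredSingle j)‖
      ≤ 1 - (Fintype.card ι : ℝ)⁻¹ := by
    nlinarith [norm_toLp_centeredSingle_sq i, norm_toLp_centeredSingle_sq j,
      two_mul_le_add_sq ‖toLp 2 (centeredSingle i)‖ ‖toLp 2 (centeredSingle j)‖]
  calc |B i j| ≤ ‖toLp 2 (centeredSingle i)‖ * ‖B‖ * ‖toLp 2 (centeredSingle j)‖ :=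
        hentry ▸ abs_dotProduct_mulVec_le_l2_opNorm B _ _
    _ = ‖B‖ * (‖toLp 2 (centeredSingle i)‖ * ‖toLp 2 (centeredSingle j)‖) := by ring
    _ ≤ ‖B‖ * (1 - (Fintype.card ι : ℝ)⁻¹) := by gcongr

theorem apply_pos_of_l2_opNorm_sub_lt {P : Matrix ι ι ℝ} (hrow : P *ᵥ 1 = 1) (hcol : 1 ᵥ* P = 1)
    (hP : ‖P - (1 / (Fintype.card ι : ℝ)) • of (fun _ _ : ι => (1 : ℝ))‖
      < 1 / ((Fintype.card ι : ℝ) - 1)) (i j : ι) : 0 < P i j := by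
  set n : ℝ := (Fintype.card ι : ℝ)
  set B := P - (1 / n) • of (fun _ _ : ι => (1 : ℝ))
  have hn : (0 : ℝ) < n := Nat.cast_pos.mpr (Fintype.card_pos_iff.mpr ⟨i⟩)
  have hn1 : 0 < n - 1 := one_div_pos.mp ((norm_nonneg B).trans_lt hP)
  have hJrow : of (fun _ _ : ι => (1 : ℝ)) *ᵥ 1 = n • 1 := by ext; simp [mulVec, dotProduct, n]
  have hJcol : 1 ᵥ* of (fun _ _ : ι => (1 : ℝ)) = n • 1 := by ext; simp [vecMul, dotProduct, n]
  have hrowB : B *ᵥ 1 = 0 := by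
    rw [sub_mulVec, smul_mulVec, hrow, hJrow, smul_smul, one_div_mul_cancel hn.ne', one_smul,
      sub_self]
  have hcolB : 1 ᵥ* B = 0 := by
    rw [vecMul_sub, vecMul_smul, hcol, hJcol, smul_smul, one_div_mul_cancel hn.ne', one_smul,
      sub_self]
  have hbound : |B i j| < 1 / n :=
    calc |B i j| ≤ ‖B‖ * (1 - n⁻¹) := abs_apply_le_l2_opNorm_mul hrowB hcolB i j
      _ < 1 / (n - 1) * (1 - n⁻¹) := by
        gcongr; exact sub_pos.mpr (inv_lt_one_of_one_lt₀ (by linarith))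
      _ = 1 / n := by field_simp
  have hPB : P i j = B i j + 1 / n := by simp [B]
  linarith [neg_abs_le (B i j)]

end L2

end Matrix

namespace SimpleGraph

variable {V R : Type*} [DecidableEq V] (G : SimpleGraph V)

section Walk

variable [Fintype V]

theorem exists_walk_length_le_of_pow_apply_ne_zero [Semiring R] {M : Matrix V V R}
    (hM : ∀ i j, M i j ≠ 0 → i = j ∨ G.Adj i j) (k : ℕ) {i j : V} (h : (M ^ k) i j ≠ 0) :
    ∃ w : G.Walk i j, w.length ≤ k := by
  induction k generalizing i with
  | zero =>
    obtain rfl : i = j := by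
      by_contra hij
      simp [Matrix.one_apply_ne hij] at h
    exact ⟨.nil, le_rfl⟩
  | succ k ih =>
    rw [pow_succ', Matrix.mul_apply] at h
    obtain ⟨l, -, hl⟩ := Finset.exists_ne_zero_of_sum_ne_zero h
    obtain ⟨w, hw⟩ := ih (right_ne_zero_of_mul hl)
    rcases hM i l (left_ne_zero_of_mul hl) with rfl | hadj
    · exact ⟨w, hw.trans k.le_succ⟩
    · exact ⟨.cons hadj w, by simpa using hw⟩

variable [CommSemiring R] {M : Matrix V V R}

theorem exists_walk_length_le_of_aeval_apply_ne_zero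
    (hM : ∀ i j, M i j ≠ 0 → i = j ∨ G.Adj i j) (p : R[X]) {i j : V} (h : aeval M p i j ≠ 0) :
    ∃ w : G.Walk i j, w.length ≤ p.natDegree := by
  rw [aeval_eq_sum_range, Matrix.sum_apply] at h
  obtain ⟨k, hk, hkij⟩ := Finset.exists_ne_zero_of_sum_ne_zero h
  rw [Matrix.smul_apply, smul_eq_mul] at hkij
  obtain ⟨w, hw⟩ := G.exists_walk_length_le_of_pow_apply_ne_zero hM k (right_ne_zero_of_mul hkij)
  exact ⟨w, hw.trans (Nat.lt_succ_iff.mp (Finset.mem_range.mp hk))⟩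

theorem diam_le_natDegree_of_aeval_apply_ne_zero
    (hM : ∀ i j, M i j ≠ 0 → i = j ∨ G.Adj i j) (p : R[X]) (h : ∀ i j, aeval M p i j ≠ 0) :
    G.diam ≤ p.natDegree := by
  refine ENat.toNat_le_of_le_natCast (G.ediam_le_of_edist_le fun i j => ?_)
  obtain ⟨w, hw⟩ := G.exists_walk_length_le_of_aeval_apply_ne_zero hM p (h i j)
  exact (edist_le w).trans (by exact_mod_cast hw)

end Walk

section AdjMatrix

variable [DecidableRel G.Adj]

theorem eq_or_adj_of_adjMatrix_sub_smul_one_apply_ne_zero [Ring R] (c : R) (i j : V)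
    (h : (G.adjMatrix R - c • 1) i j ≠ 0) : i = j ∨ G.Adj i j := by
  by_contra! hij
  simp [Matrix.one_apply_ne hij.1, hij.2] at h

variable [Fintype V] {G} {d : ℕ}

theorem IsRegularOfDegree.adjMatrix_sub_smul_one_mulVec_one [Ring R]
    (hreg : G.IsRegularOfDegree d) : (G.adjMatrix R - (d : R) • 1) *ᵥ 1 = 0 := by
  ext i
  simp [sub_mulVec, smul_mulVec, hreg i]

theorem IsRegularOfDegree.one_vecMul_adjMatrix_sub_smul_one [CommRing R]
    (hreg : G.IsRegularOfDegree d) : 1 ᵥ* (G.adjMatrix R - (d : R) • 1) = 0 := by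
  rw [← mulVec_transpose, transpose_sub, transpose_smul, transpose_one, transpose_adjMatrix,
    hreg.adjMatrix_sub_smul_one_mulVec_one]

end AdjMatrix

end SimpleGraph

theorem stmt9_general (n m d : ℕ) (G : SimpleGraph (Fin n)) [DecidableRel G.Adj]
    (hreg : G.IsRegularOfDegree d) (p : Polynomial ℝ)
    (hdeg : p.natDegree = m) (hp0 : p.eval 0 = 1)
    (hnorm : ‖Polynomial.aeval
          (G.adjMatrix ℝ - (d : ℝ) • (1 : Matrix (Fin n) (Fin n) ℝ)) p -
        (1 / (n : ℝ)) • Matrix.of (fun _ _ : Fin n => (1 : ℝ))‖ < 1 / ((n : ℝ) - 1)) :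
    (∀ i j : Fin n,
        0 < Polynomial.aeval
            (G.adjMatrix ℝ - (d : ℝ) • (1 : Matrix (Fin n) (Fin n) ℝ)) p i j) ∧
      G.diam ≤ m := by
  have hrow := aeval_mulVec_of_mulVec_eq_zero hreg.adjMatrix_sub_smul_one_mulVec_one p
  have hcol := vecMul_aeval_of_vecMul_eq_zero hreg.one_vecMul_adjMatrix_sub_smul_one p
  rw [hp0, one_smul] at hrow hcol
  have hpos := apply_pos_of_l2_opNorm_sub_lt hrow hcol
    (by simpa only [Fintype.card_fin] using hnorm)
  refine ⟨hpos, hdeg ▸ G.diam_le_natDegree_of_aeval_apply_ne_zero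
    (G.eq_or_adj_of_adjMatrix_sub_smul_one_apply_ne_zero (d : ℝ)) p fun i j => (hpos i j).ne'⟩

/-- If `A` is the adjacency matrix of a `d`-regular graph on `n ≥ 2`
vertices and `p` is a polynomial of degree `m` with `p 0 = 1` such that the operator
norm `‖p(A - dI) - J/n‖ < 1/(n-1)`, then every entry of `p(A - dI)` is positive and
the diameter of the graph is at most `m`. -/
theorem stmt9 (n m d : ℕ) (hn : 2 ≤ n) (G : SimpleGraph (Fin n)) [DecidableRel G.Adj]
    (hreg : G.IsRegularOfDegree d) (p : Polynomial ℝ)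
    (hdeg : p.natDegree = m) (hp0 : p.eval 0 = 1)
    (hnorm : ‖Polynomial.aeval
          (G.adjMatrix ℝ - (d : ℝ) • (1 : Matrix (Fin n) (Fin n) ℝ)) p -
        (1 / (n : ℝ)) • Matrix.of (fun _ _ : Fin n => (1 : ℝ))‖ < 1 / ((n : ℝ) - 1)) :
    (∀ i j : Fin n,
        0 < Polynomial.aeval
            (G.adjMatrix ℝ - (d : ℝ) • (1 : Matrix (Fin n) (Fin n) ℝ)) p i j) ∧
      G.diam ≤ m :=
  stmt9_general n m d G hreg p hdeg hp0 hnorm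
end
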